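/- Let X be a real Banach space and (e_i)_{i≥1} a normalized unconditional basis of X. Then (e_i) has the local Property Q if and only if (e_i) is not equivalent to the canonical basis of c_0 (i.e., there is no C ≥ 1 such that C^{-1}·max_i |a_i| ≤ ‖∑ a_i e_i‖ ≤ C·max_i |a_i| for all finitely supported scalars (a_i)). -/

import Mathlib

/-!
If `(e_i)` is `C`-equivalent to the unit vector basis of `c₀`, the radial projection
`x ↦ x / ‖x‖` is step preserving with `ω(1/d) ≤ 2C²/d`; but `z(m̄)` vanishes at the coordinate
`m_d`, so its image stays at distance `≥ C⁻²` from the normalised vector `∑_{i<k} e_i`, and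
Property Q fails.

Conversely, if `(e_i)` is not equivalent to the `c₀` basis, unconditionality forces the partial
sums `‖∑_{i<n} e_i‖` to be unbounded, so `Q` can be chosen lacunary. The blocks
`u_ρ = ∑_{m_ρ ≤ i < m_{ρ+1}} e_i` then grow geometrically, and step preservation writes
`F(z(m̄)) = ∑ g_ρ u_ρ`. Comparing `z(m̄)` with the two `1/d`-perturbations that merge the blocks
`ρ, ρ + 1` for `ρ` even, resp. odd, bounds `|g_ρ - g_{ρ+1}| ‖u_ρ‖`; summation by parts against
the geometric growth shows that `F(z(m̄))` is `O(Kγε)`-close to a multiple of `∑_{i<k} e_i`, hence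
to the normalised one.
-/

/-- The sup norm (`ℓ∞` norm) on `ℝ^k`. -/
noncomputable def supNorm {k : ℕ} (x : Fin k → ℝ) : ℝ := ⨆ i, |x i|

/-- The vector `z(m̄) = ∑_{s=1}^d (1 - (s-1)/d)·1_{(m_{s-1}, m_s]}` in `ℝ^k` (with
0-indexed coordinates, coordinate `i` corresponding to the basis vector `e i`). -/
noncomputable def zVec (d k : ℕ) (m : ℕ → ℕ) : Fin k → ℝ :=
  fun i => ∑ s ∈ Finset.Icc 1 d, (1 - ((s : ℝ) - 1) / (d : ℝ)) *
    (if m (s - 1) ≤ (i : ℕ) ∧ (i : ℕ) < m s then 1 else 0)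

open Finset

theorem abs_le_supNorm {k : ℕ} (x : Fin k → ℝ) (i : Fin k) : |x i| ≤ supNorm x :=
  le_ciSup (f := fun j => |x j|) (Set.finite_range _).bddAbove i

theorem supNorm_le {k : ℕ} {x : Fin k → ℝ} {B : ℝ} (hB : 0 ≤ B) (h : ∀ i, |x i| ≤ B) :
    supNorm x ≤ B :=
  Real.iSup_le h hB

theorem abs_sub_last_mul_le {g w : ℕ → ℝ} {d : ℕ} {M : ℝ} (hM : 0 ≤ M)
    (hw0 : ∀ ρ, 0 ≤ w ρ) (hw : ∀ ρ < d, 2 * w ρ ≤ w (ρ + 1))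
    (hstep : ∀ ρ < d, |g ρ - g (ρ + 1)| * w ρ ≤ M) :
    ∀ ρ ≤ d, |g ρ - g d| * w ρ ≤ 2 * M := by
  intro ρ hρ
  induction hρ using Nat.decreasingInduction with
  | self => simpa using hM
  | of_succ ρ hρ ih =>
    have hnext : |g (ρ + 1) - g d| * w ρ ≤ M := by
      nlinarith [abs_nonneg (g (ρ + 1) - g d), hw ρ hρ]
    calc |g ρ - g d| * w ρ ≤ (|g ρ - g (ρ + 1)| + |g (ρ + 1) - g d|) * w ρ := by
          gcongr
          · exact hw0 ρ
          · exact abs_sub_le _ _ _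
      _ ≤ 2 * M := by linarith [hstep ρ hρ]

theorem exists_lacunary_set {t : ℕ → ℝ} (ht : ¬ BddAbove (Set.range t)) (R : ℝ) :
    ∃ Q : Set ℕ, Q.Infinite ∧ ∀ p ∈ Q, ∀ q ∈ Q, p < q → R * t p ≤ t q := by
  have hfreq : ∀ B, ∃ᶠ n in Filter.atTop, B ≤ t n := fun B => by
    by_contra h
    rw [Filter.not_frequently] at h
    exact ht (Filter.isBoundedUnder_of_eventually_le
      (h.mono fun n hn => (not_le.1 hn).le)).bddAbove_range
  obtain ⟨f, -, hf⟩ := exists_seq_of_forall_finset_exists (fun _ => True)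
    (fun p q => p < q ∧ R * t p ≤ t q) fun s _ => by
      obtain ⟨n, hn, hsn⟩ := ((hfreq (∑ p ∈ s, |R * t p|)).and_eventually
        ((Filter.eventually_all_finset s).2 fun p _ => Filter.eventually_gt_atTop p)).exists
      exact ⟨n, trivial, fun p hp => ⟨hsn p hp, (le_abs_self _).trans
        ((single_le_sum (fun q _ => abs_nonneg (R * t q)) hp).trans hn)⟩⟩
  have hmono : StrictMono f := fun a b hab => (hf a b hab).1
  refine ⟨Set.range f, Set.infinite_range_of_injective hmono.injective, ?_⟩
  rintro _ ⟨a, rfl⟩ _ ⟨b, rfl⟩ hab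
  exact (hf a b (hmono.lt_iff_lt.1 hab)).2

theorem mul_norm_sub_le_norm_sub_of_lacunary {X : Type*} [NormedAddCommGroup X] {a b c : X}
    {R : ℝ} (hR : 1 ≤ R)
    (hab : R * ‖a‖ ≤ ‖b‖) (hbc : R * ‖b‖ ≤ ‖c‖) : (R - 1) / 2 * ‖b - a‖ ≤ ‖c - b‖ := by
  have hba : ‖b - a‖ ≤ 2 * ‖b‖ := by
    nlinarith [norm_sub_le b a, norm_nonneg a]
  have hcb : ‖c‖ - ‖b‖ ≤ ‖c - b‖ := norm_sub_norm_le c b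
  nlinarith

theorem norm_sub_inv_norm_smul_le {X : Type*} [NormedAddCommGroup X] [NormedSpace ℝ X]
    {x v : X} {c δ : ℝ} (hx : ‖x‖ = 1) (hc : 0 ≤ c)
    (h : ‖x - c • v‖ ≤ δ) : ‖x - ‖v‖⁻¹ • v‖ ≤ 2 * δ := by
  have hcorr : ‖(c - ‖v‖⁻¹) • v‖ ≤ δ := by
    rcases eq_or_ne v 0 with rfl | hv
    · simpa using (norm_nonneg _).trans h
    have hv' : 0 < ‖v‖ := norm_pos_iff.2 hv
    calc ‖(c - ‖v‖⁻¹) • v‖ = |‖c • v‖ - ‖x‖| := by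
          rw [norm_smul, norm_smul, Real.norm_of_nonneg hc, hx, Real.norm_eq_abs,
            ← abs_of_pos hv', ← abs_mul, abs_of_pos hv', sub_mul, inv_mul_cancel₀ hv'.ne']
      _ ≤ ‖c • v - x‖ := abs_norm_sub_norm_le _ _
      _ ≤ δ := by rwa [norm_sub_rev]
  calc ‖x - ‖v‖⁻¹ • v‖ = ‖(x - c • v) + (c - ‖v‖⁻¹) • v‖ := by rw [sub_smul]; abel_nf
    _ ≤ 2 * δ := by linarith [norm_add_le (x - c • v) ((c - ‖v‖⁻¹) • v)]

section BlockEstimates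

variable {X : Type*} [NormedAddCommGroup X] [NormedSpace ℝ X] {u : ℕ → X} {d : ℕ} {K r : ℝ}

theorem abs_mul_norm_le_of_suppression
    (hunc : ∀ S ⊆ range (d + 1), ∀ c : ℕ → ℝ,
      ‖∑ ρ ∈ S, c ρ • u ρ‖ ≤ K * ‖∑ ρ ∈ range (d + 1), c ρ • u ρ‖)
    (c : ℕ → ℝ) {σ : ℕ} (hσ : σ ≤ d) :
    |c σ| * ‖u σ‖ ≤ K * ‖∑ ρ ∈ range (d + 1), c ρ • u ρ‖ := by
  simpa [norm_smul] using hunc {σ} (by simpa using Nat.lt_succ_of_le hσ) c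

theorem norm_sum_shift_smul_le (hr : 0 < r) (hgrowth : ∀ ρ < d, r * ‖u ρ‖ ≤ ‖u (ρ + 1)‖)
    {φ : ℕ → ℝ} {M : ℝ} (hφ : ∀ σ ≤ d, |φ σ| * ‖u σ‖ ≤ M) {S : Finset ℕ} (hS : S ⊆ range d) :
    ‖∑ ρ ∈ S, φ (ρ + 1) • u ρ‖ ≤ d * (M / r) := by
  have hM : 0 ≤ M := (by positivity : 0 ≤ |φ 0| * ‖u 0‖).trans (hφ 0 d.zero_le)
  have hterm : ∀ ρ ∈ S, ‖φ (ρ + 1) • u ρ‖ ≤ M / r := fun ρ hρ => by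
    have hρd : ρ < d := mem_range.1 (hS hρ)
    rw [norm_smul, Real.norm_eq_abs, le_div_iff₀ hr]
    nlinarith [hgrowth ρ hρd, hφ (ρ + 1) hρd, abs_nonneg (φ (ρ + 1))]
  calc ‖∑ ρ ∈ S, φ (ρ + 1) • u ρ‖ ≤ S.card • (M / r) :=
        (norm_sum_le _ _).trans (sum_le_card_nsmul _ _ _ hterm)
    _ ≤ d * (M / r) := by
        rw [nsmul_eq_mul]
        gcongr
        simpa using card_le_card hS

theorem abs_sub_succ_mul_norm_le_of_merge (hK : 0 ≤ K)
    (hunc : ∀ S ⊆ range (d + 1), ∀ c : ℕ → ℝ,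
      ‖∑ ρ ∈ S, c ρ • u ρ‖ ≤ K * ‖∑ ρ ∈ range (d + 1), c ρ • u ρ‖)
    {g h : ℕ → ℝ} {η : ℝ} (hclose : ‖∑ ρ ∈ range (d + 1), (g ρ - h ρ) • u ρ‖ ≤ η)
    {ρ : ℕ} (hρ : ρ < d) (hgrow : ‖u ρ‖ ≤ ‖u (ρ + 1)‖) (hmerge : h ρ = h (ρ + 1)) :
    |g ρ - g (ρ + 1)| * ‖u ρ‖ ≤ 2 * (K * η) := by
  have hcoef : ∀ σ ≤ d, |g σ - h σ| * ‖u σ‖ ≤ K * η := fun σ hσ =>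
    (abs_mul_norm_le_of_suppression hunc (fun ρ => g ρ - h ρ) hσ).trans
      (mul_le_mul_of_nonneg_left hclose hK)
  have habs : |g ρ - g (ρ + 1)| ≤ |g ρ - h ρ| + |g (ρ + 1) - h (ρ + 1)| := by
    simpa only [hmerge, sub_sub_sub_cancel_right] using
      abs_sub (g ρ - h ρ) (g (ρ + 1) - h (ρ + 1))
  nlinarith [hcoef ρ hρ.le, hcoef (ρ + 1) hρ, norm_nonneg (u ρ),
    mul_le_mul_of_nonneg_left hgrow (abs_nonneg (g (ρ + 1) - h (ρ + 1)))]

theorem norm_sum_sub_succ_smul_le_of_merge (hK : 0 ≤ K)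
    (hunc : ∀ S ⊆ range (d + 1), ∀ c : ℕ → ℝ,
      ‖∑ ρ ∈ S, c ρ • u ρ‖ ≤ K * ‖∑ ρ ∈ range (d + 1), c ρ • u ρ‖)
    (hr : 0 < r) (hgrowth : ∀ ρ < d, r * ‖u ρ‖ ≤ ‖u (ρ + 1)‖)
    {g h : ℕ → ℝ} {η : ℝ} (hclose : ‖∑ ρ ∈ range (d + 1), (g ρ - h ρ) • u ρ‖ ≤ η)
    {S : Finset ℕ} (hS : S ⊆ range d) (hmerge : ∀ ρ ∈ S, h ρ = h (ρ + 1)) :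
    ‖∑ ρ ∈ S, (g ρ - g (ρ + 1)) • u ρ‖ ≤ K * η + d * (K * η / r) := by
  have hsplit : ∑ ρ ∈ S, (g ρ - g (ρ + 1)) • u ρ =
      ∑ ρ ∈ S, (g ρ - h ρ) • u ρ - ∑ ρ ∈ S, (g (ρ + 1) - h (ρ + 1)) • u ρ := by
    rw [← sum_sub_distrib]
    refine sum_congr rfl fun ρ hρ => ?_
    rw [← sub_smul, hmerge ρ hρ]
    ring_nf
  have hSd : S ⊆ range (d + 1) := hS.trans (range_subset_range.2 d.le_succ)
  rw [hsplit]
  refine (norm_sub_le _ _).trans (add_le_add ?_ ?_)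
  · exact (hunc S hSd _).trans (mul_le_mul_of_nonneg_left hclose hK)
  · exact norm_sum_shift_smul_le hr hgrowth (fun σ hσ =>
      (abs_mul_norm_le_of_suppression hunc (fun ρ => g ρ - h ρ) hσ).trans
        (mul_le_mul_of_nonneg_left hclose hK)) hS

theorem norm_sum_sub_last_smul_le (hK : 0 ≤ K)
    (hunc : ∀ S ⊆ range (d + 1), ∀ c : ℕ → ℝ,
      ‖∑ ρ ∈ S, c ρ • u ρ‖ ≤ K * ‖∑ ρ ∈ range (d + 1), c ρ • u ρ‖)
    (hr2 : 2 ≤ r) (hrd : 6 * d ≤ r) (hgrowth : ∀ ρ < d, r * ‖u ρ‖ ≤ ‖u (ρ + 1)‖)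
    {g hE hO : ℕ → ℝ} {η : ℝ}
    (hEclose : ‖∑ ρ ∈ range (d + 1), (g ρ - hE ρ) • u ρ‖ ≤ η)
    (hOclose : ‖∑ ρ ∈ range (d + 1), (g ρ - hO ρ) • u ρ‖ ≤ η)
    (hEmerge : ∀ ρ < d, Even ρ → hE ρ = hE (ρ + 1))
    (hOmerge : ∀ ρ < d, Odd ρ → hO ρ = hO (ρ + 1)) :
    ‖∑ ρ ∈ range (d + 1), (g ρ - g d) • u ρ‖ ≤ 3 * (K * η) := by
  have hr : 0 < r := by linarith
  have hKη : 0 ≤ K * η := mul_nonneg hK ((norm_nonneg _).trans hEclose)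
  have hstep : ∀ ρ < d, |g ρ - g (ρ + 1)| * ‖u ρ‖ ≤ 2 * (K * η) := by
    intro ρ hρ
    have hgrow : ‖u ρ‖ ≤ ‖u (ρ + 1)‖ := by nlinarith [hgrowth ρ hρ, norm_nonneg (u ρ)]
    rcases Nat.even_or_odd ρ with hev | hodd
    · exact abs_sub_succ_mul_norm_le_of_merge hK hunc hEclose hρ hgrow (hEmerge ρ hρ hev)
    · exact abs_sub_succ_mul_norm_le_of_merge hK hunc hOclose hρ hgrow (hOmerge ρ hρ hodd)
  have htail := abs_sub_last_mul_le (w := fun ρ => ‖u ρ‖) (by linarith) (fun _ => norm_nonneg _)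
    (fun ρ hρ => by nlinarith [hgrowth ρ hρ, norm_nonneg (u ρ)]) hstep
  -- Summation by parts: the differences are controlled through the merged vectors, the tails
  -- `g (ρ + 1) - g d` through the growth of `‖u ρ‖`.
  have habel : ∑ ρ ∈ range (d + 1), (g ρ - g d) • u ρ =
      (∑ ρ ∈ range d with Even ρ, (g ρ - g (ρ + 1)) • u ρ +
        ∑ ρ ∈ range d with ¬ Even ρ, (g ρ - g (ρ + 1)) • u ρ) +
      ∑ ρ ∈ range d, (g (ρ + 1) - g d) • u ρ := by
    rw [sum_range_succ, sub_self, zero_smul, add_zero, sum_filter_add_sum_filter_not,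
      ← sum_add_distrib]
    exact sum_congr rfl fun ρ _ => by rw [← add_smul, sub_add_sub_cancel]
  have hEven := norm_sum_sub_succ_smul_le_of_merge hK hunc hr hgrowth hEclose
    (filter_subset _ _) fun ρ hρ => hEmerge ρ (mem_range.1 (mem_filter.1 hρ).1) (mem_filter.1 hρ).2
  have hOdd := norm_sum_sub_succ_smul_le_of_merge hK hunc hr hgrowth hOclose
    (filter_subset _ _) fun ρ hρ => hOmerge ρ (mem_range.1 (mem_filter.1 hρ).1)
      (Nat.not_even_iff_odd.1 (mem_filter.1 hρ).2)
  have hTail := norm_sum_shift_smul_le hr hgrowth (φ := fun σ => g σ - g d) htail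
    (subset_refl (range d))
  have hsmall : (d : ℝ) * (K * η / r) ≤ K * η / 6 := by
    rw [mul_div_assoc', div_le_div_iff₀ hr (by norm_num)]
    nlinarith
  rw [habel]
  refine norm_add₃_le.trans ?_
  have : (d : ℝ) * (2 * (2 * (K * η)) / r) = 4 * ((d : ℝ) * (K * η / r)) := by ring
  linarith

end BlockEstimates

section

variable {X : Type*} [NormedAddCommGroup X] [NormedSpace ℝ X]

def KUnconditional (K : ℝ) (e : ℕ → X) : Prop :=
  ∀ (s : Finset ℕ) (a b : ℕ → ℝ), (∀ i ∈ s, |a i| ≤ |b i|) →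
    ‖∑ i ∈ s, a i • e i‖ ≤ K * ‖∑ i ∈ s, b i • e i‖

def IsEquivC0 (C : ℝ) (e : ℕ → X) : Prop :=
  ∀ (s : Finset ℕ) (hs : s.Nonempty) (a : ℕ → ℝ),
    C⁻¹ * s.sup' hs (fun i => |a i|) ≤ ‖∑ i ∈ s, a i • e i‖ ∧
    ‖∑ i ∈ s, a i • e i‖ ≤ C * s.sup' hs (fun i => |a i|)

namespace KUnconditional

variable {K : ℝ} {e : ℕ → X}

theorem norm_sum_filter_le (he : KUnconditional K e) (s : Finset ℕ) (p : ℕ → Prop)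
    [DecidablePred p] (a : ℕ → ℝ) :
    ‖∑ i ∈ s with p i, a i • e i‖ ≤ K * ‖∑ i ∈ s, a i • e i‖ := by
  simpa [sum_filter, ite_smul] using
    he s (fun i => if p i then a i else 0) a fun i _ => by split_ifs <;> simp

theorem norm_sum_le_of_subset (he : KUnconditional K e) {s t : Finset ℕ} (hst : s ⊆ t)
    (a : ℕ → ℝ) : ‖∑ i ∈ s, a i • e i‖ ≤ K * ‖∑ i ∈ t, a i • e i‖ := by
  classical
  simpa [filter_mem_eq_inter, inter_eq_right.2 hst] using he.norm_sum_filter_le t (· ∈ s) a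

theorem abs_le_mul_norm_sum (he : KUnconditional K e) (hnorm : ∀ i, ‖e i‖ = 1)
    {s : Finset ℕ} (a : ℕ → ℝ) {j : ℕ} (hj : j ∈ s) : |a j| ≤ K * ‖∑ i ∈ s, a i • e i‖ := by
  simpa [norm_smul, hnorm] using he.norm_sum_le_of_subset (singleton_subset_iff.2 hj) a

theorem isEquivC0_of_norm_partialSum_le (he : KUnconditional K e) (hK : 1 ≤ K)
    (hnorm : ∀ i, ‖e i‖ = 1) {B : ℝ} (hB : ∀ n, ‖∑ i ∈ range n, e i‖ ≤ B) :
    IsEquivC0 (K * K * (B + 1)) e := by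
  have hB0 : 0 ≤ B := by simpa using hB 0
  intro s hs a
  obtain ⟨j, hj, hjM⟩ := exists_mem_eq_sup' hs fun i => |a i|
  set M := s.sup' hs fun i => |a i|
  have hM : 0 ≤ M := hjM ▸ abs_nonneg _
  constructor
  · calc (K * K * (B + 1))⁻¹ * M ≤ K⁻¹ * M := by gcongr; nlinarith
      _ ≤ ‖∑ i ∈ s, a i • e i‖ := by
          rw [inv_mul_le_iff₀ (by linarith), hjM]
          exact he.abs_le_mul_norm_sum hnorm a hj
  · have hsub : s ⊆ range (s.max' hs + 1) := fun i hi =>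
      mem_range.2 (Nat.lt_succ_of_le (le_max' s i hi))
    calc ‖∑ i ∈ s, a i • e i‖ ≤ K * ‖∑ i ∈ s, M • e i‖ :=
          he s a (fun _ => M) fun i hi => (le_sup' (fun i => |a i|) hi).trans (le_abs_self M)
      _ = K * (M * ‖∑ i ∈ s, (1 : ℝ) • e i‖) := by
          simp [← smul_sum, norm_smul, Real.norm_of_nonneg hM]
      _ ≤ K * (M * (K * ‖∑ i ∈ range (s.max' hs + 1), (1 : ℝ) • e i‖)) := by
          gcongr; exact he.norm_sum_le_of_subset hsub _
      _ ≤ K * K * (B + 1) * M := by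
          have hKKM : 0 ≤ K * K * M := by positivity
          simp only [one_smul]
          nlinarith [mul_le_mul_of_nonneg_left ((hB (s.max' hs + 1)).trans (le_add_of_nonneg_right
            zero_le_one)) hKKM]

theorem not_bddAbove_norm_partialSum (he : KUnconditional K e) (hK : 1 ≤ K)
    (hnorm : ∀ i, ‖e i‖ = 1) (hc0 : ¬ ∃ C, 1 ≤ C ∧ IsEquivC0 C e) :
    ¬ BddAbove (Set.range fun n => ‖∑ i ∈ range n, e i‖) := by
  rintro ⟨B, hB⟩
  have hB0 : 0 ≤ B := hB ⟨0, by simp⟩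
  exact hc0 ⟨_, by nlinarith,
    he.isEquivC0_of_norm_partialSum_le hK hnorm fun n => hB ⟨n, rfl⟩⟩

end KUnconditional

def MapsToPosSphere (e : ℕ → X) {k : ℕ} (F : (Fin k → ℝ) → Fin k → ℝ) : Prop :=
  ∀ x : Fin k → ℝ, supNorm x = 1 → (∀ i, 0 ≤ x i) →
    ‖∑ i : Fin k, F x i • e (i : ℕ)‖ = 1 ∧ ∀ i, 0 ≤ F x i

def IsStepPreserving {k : ℕ} (F : (Fin k → ℝ) → Fin k → ℝ) : Prop :=
  ∀ x : Fin k → ℝ, supNorm x = 1 → (∀ i, 0 ≤ x i) → ∀ i j, x i = x j → F x i = F x j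

/-- `ω_F(t) ≤ η`, for `F : S⁺_{ℓ∞^k} → X_k`. -/
def ModulusLE (e : ℕ → X) {k : ℕ} (t η : ℝ) (F : (Fin k → ℝ) → Fin k → ℝ) : Prop :=
  ∀ x y : Fin k → ℝ, supNorm x = 1 → (∀ i, 0 ≤ x i) → supNorm y = 1 → (∀ i, 0 ≤ y i) →
    supNorm (x - y) ≤ t →
    ‖(∑ i : Fin k, F x i • e (i : ℕ)) - ∑ i : Fin k, F y i • e (i : ℕ)‖ ≤ η

def LocalPropertyQ (e : ℕ → X) (γ : ℝ) : Prop :=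
  ∀ d : ℕ, 1 ≤ d → ∀ ε : ℝ, 0 < ε → ε < 1 →
    ∃ Q : Set ℕ, Q.Infinite ∧
      ∀ m : ℕ → ℕ, m 0 = 0 → (∀ s, s < d → m s < m (s + 1)) →
        (∀ s, 1 ≤ s → s ≤ d → m s ∈ Q) →
        ∀ k : ℕ, k ∈ Q → m d < k →
        ∀ F : (Fin k → ℝ) → Fin k → ℝ,
          MapsToPosSphere e F → IsStepPreserving F → ModulusLE e (1 / (d : ℝ)) (γ * ε) F →
          ‖(∑ i : Fin k, F (zVec d k m) i • e (i : ℕ)) -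
            ‖∑ i ∈ range k, e i‖⁻¹ • ∑ i ∈ range k, e i‖ ≤ ε

end

/-- The index `ρ ≤ d` of the block `[b ρ, b (ρ + 1))` containing `i`. -/
def blockIndex (b : ℕ → ℕ) (d i : ℕ) : ℕ := Nat.findGreatest (fun ρ => b ρ ≤ i) d

noncomputable def stair (b : ℕ → ℕ) (d k : ℕ) (ℓ : ℕ → ℕ) : Fin k → ℝ :=
  fun i => 1 - (ℓ (blockIndex b d i) : ℝ) / d

/-- Merges the blocks `ρ` and `ρ + 1` for every `ρ ≡ p [MOD 2]`. -/
def mergeLevel (p ρ : ℕ) : ℕ := ρ - (ρ + p) % 2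

theorem mergeLevel_le (p ρ : ℕ) : mergeLevel p ρ ≤ ρ := Nat.sub_le _ _

theorem le_mergeLevel_add_one (p ρ : ℕ) : ρ ≤ mergeLevel p ρ + 1 := by
  unfold mergeLevel; omega

theorem mergeLevel_succ {p ρ : ℕ} (h : (ρ + p) % 2 = 0) :
    mergeLevel p (ρ + 1) = mergeLevel p ρ := by
  unfold mergeLevel; omega

section Blocks

variable {b : ℕ → ℕ} {d : ℕ}

theorem blockIndex_le (i : ℕ) : blockIndex b d i ≤ d := Nat.findGreatest_le d

theorem blockIndex_eq_iff (hb : StrictMono b) (hb0 : b 0 = 0) {ρ i : ℕ} (hρ : ρ ≤ d)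
    (hi : i < b (d + 1)) : blockIndex b d i = ρ ↔ b ρ ≤ i ∧ i < b (ρ + 1) := by
  rw [blockIndex, Nat.findGreatest_eq_iff]
  constructor
  · rintro ⟨-, hle, hgt⟩
    refine ⟨?_, ?_⟩
    · rcases Nat.eq_zero_or_pos ρ with rfl | hpos
      · simp [hb0]
      · exact hle hpos.ne'
    · rcases hρ.lt_or_eq with hlt | rfl
      · exact not_le.1 (hgt ρ.lt_succ_self hlt)
      · exact hi
  · rintro ⟨hle, hlt⟩
    exact ⟨hρ, fun _ => hle, fun σ hσ _ hσi =>
      (hlt.trans_le (hb.monotone (Nat.succ_le_of_lt hσ))).not_ge hσi⟩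

theorem blockIndex_apply (hb : StrictMono b) (hb0 : b 0 = 0) {ρ : ℕ} (hρ : ρ ≤ d) :
    blockIndex b d (b ρ) = ρ :=
  (blockIndex_eq_iff hb hb0 hρ (hb (Nat.lt_succ_of_le hρ))).2 ⟨le_rfl, hb ρ.lt_succ_self⟩

theorem filter_blockIndex_eq (hb : StrictMono b) (hb0 : b 0 = 0) {ρ : ℕ} (hρ : ρ ≤ d) :
    {i ∈ range (b (d + 1)) | blockIndex b d i = ρ} = Ico (b ρ) (b (ρ + 1)) := by
  ext i
  simp only [mem_filter, mem_range, mem_Ico]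
  constructor
  · rintro ⟨hi, h⟩
    exact (blockIndex_eq_iff hb hb0 hρ hi).1 h
  · intro h
    have hi : i < b (d + 1) := h.2.trans_le (hb.monotone (by omega))
    exact ⟨hi, (blockIndex_eq_iff hb hb0 hρ hi).2 h⟩

theorem stair_mem_posSphere (hb : StrictMono b) (hb0 : b 0 = 0) {k : ℕ} (hk : 0 < k)
    {ℓ : ℕ → ℕ} (hℓ : ∀ ρ, ℓ ρ ≤ ρ) :
    supNorm (stair b d k ℓ) = 1 ∧ ∀ i, 0 ≤ stair b d k ℓ i := by
  have hle : ∀ i, (ℓ (blockIndex b d i) : ℝ) / d ≤ 1 := fun i =>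
    div_le_one_of_le₀ (by exact_mod_cast (hℓ _).trans (blockIndex_le i)) d.cast_nonneg
  have hnonneg : ∀ i, 0 ≤ stair b d k ℓ i := fun i => sub_nonneg.2 (hle i)
  refine ⟨le_antisymm (supNorm_le zero_le_one fun i => ?_) ?_, hnonneg⟩
  · rw [abs_of_nonneg (hnonneg i)]
    exact sub_le_self _ (by positivity)
  · have h0 : blockIndex b d 0 = 0 := by simpa [hb0] using blockIndex_apply hb hb0 d.zero_le
    have := abs_le_supNorm (stair b d k ℓ) ⟨0, hk⟩
    simpa [stair, h0, Nat.le_zero.1 (hℓ 0)] using this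

theorem supNorm_stair_sub_le {k : ℕ} {ℓ : ℕ → ℕ} (hℓ₁ : ∀ ρ, ℓ ρ ≤ ρ)
    (hℓ₂ : ∀ ρ, ρ ≤ ℓ ρ + 1) : supNorm (stair b d k id - stair b d k ℓ) ≤ 1 / d := by
  refine supNorm_le (by positivity) fun i => ?_
  set ρ := blockIndex b d i
  have h₁ : (ℓ ρ : ℝ) ≤ ρ := by exact_mod_cast hℓ₁ ρ
  have h₂ : (ρ : ℝ) ≤ ℓ ρ + 1 := by exact_mod_cast hℓ₂ ρ
  have : (stair b d k id - stair b d k ℓ) i = ((ℓ ρ : ℝ) - ρ) / d := by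
    simp only [Pi.sub_apply, stair, id]; ring
  rw [this, abs_div, Nat.abs_cast]
  gcongr
  rw [abs_le]; constructor <;> linarith

theorem exists_blockwise_of_isStepPreserving (hb : StrictMono b) (hb0 : b 0 = 0)
    {F : (Fin (b (d + 1)) → ℝ) → Fin (b (d + 1)) → ℝ} (hF : IsStepPreserving F)
    {ℓ : ℕ → ℕ} (hℓ : ∀ ρ, ℓ ρ ≤ ρ) :
    ∃ h : ℕ → ℝ, (∀ i, F (stair b d _ ℓ) i = h (blockIndex b d i)) ∧
      ∀ ρ ≤ d, ∀ σ ≤ d, ℓ ρ = ℓ σ → h ρ = h σ := by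
  obtain ⟨hy1, hy0⟩ :=
    stair_mem_posSphere hb hb0 (d.succ_pos.trans_le (hb.id_le _)) hℓ (d := d)
  have hstep : ∀ i j : Fin (b (d + 1)), ℓ (blockIndex b d i) = ℓ (blockIndex b d j) →
      F (stair b d _ ℓ) i = F (stair b d _ ℓ) j := fun i j hij =>
    hF _ hy1 hy0 i j (by simp only [stair, hij])
  have hfac : Function.FactorsThrough (F (stair b d _ ℓ))
      fun i : Fin (b (d + 1)) => blockIndex b d i :=
    fun i j hij => hstep i j (congrArg ℓ hij)
  refine ⟨Function.extend (fun i : Fin (b (d + 1)) => blockIndex b d i) (F (stair b d _ ℓ)) 0,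
    fun i => (hfac.extend_apply 0 i).symm, fun ρ hρ σ hσ hρσ => ?_⟩
  have key : ∀ τ (hτ : τ ≤ d), Function.extend (fun i : Fin (b (d + 1)) => blockIndex b d i)
      (F (stair b d _ ℓ)) 0 τ = F (stair b d _ ℓ) ⟨b τ, hb (Nat.lt_succ_of_le hτ)⟩ :=
    fun τ hτ => by
      conv_lhs => rw [← blockIndex_apply hb hb0 hτ]
      exact hfac.extend_apply 0 ⟨b τ, hb (Nat.lt_succ_of_le hτ)⟩
  rw [key ρ hρ, key σ hσ]
  exact hstep _ _ (by simp only [blockIndex_apply hb hb0 hρ, blockIndex_apply hb hb0 hσ, hρσ])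

theorem zVec_eq_stair (hd : 0 < d) (hb : StrictMono b) (hb0 : b 0 = 0) {m : ℕ → ℕ}
    (hm : ∀ ρ ≤ d, m ρ = b ρ) : zVec d (b (d + 1)) m = stair b d (b (d + 1)) id := by
  funext i
  have hblock : ∀ s ∈ Icc 1 d,
      (m (s - 1) ≤ (i : ℕ) ∧ (i : ℕ) < m s) ↔ blockIndex b d i + 1 = s := by
    intro s hs
    obtain ⟨σ, rfl⟩ : ∃ σ, s = σ + 1 := ⟨s - 1, by grind⟩
    have hσ : σ + 1 ≤ d := (mem_Icc.1 hs).2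
    rw [Nat.add_sub_cancel, hm σ (by omega), hm (σ + 1) hσ,
      ← blockIndex_eq_iff hb hb0 (by omega) i.isLt]
    omega
  simp only [zVec, stair, id]
  rw [sum_congr rfl fun s hs => by rw [if_congr (hblock s hs) rfl rfl, mul_ite, mul_one, mul_zero],
    sum_ite_eq]
  split_ifs with h
  · push_cast; ring
  · have : blockIndex b d i = d := by
      have := blockIndex_le (b := b) (d := d) i
      simp only [mem_Icc] at h
      omega
    rw [this, div_self (by positivity)]
    ring

end Blocks

section

variable {X : Type*} [NormedAddCommGroup X]

def blockSum (e : ℕ → X) (b : ℕ → ℕ) (ρ : ℕ) : X := ∑ i ∈ Ico (b ρ) (b (ρ + 1)), e i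

variable {b : ℕ → ℕ} {d : ℕ}

theorem mul_norm_blockSum_le_of_lacunary (hb : Monotone b) {e : ℕ → X} {R : ℝ} (hR : 1 ≤ R)
    (hlac : ∀ ρ ≤ d, R * ‖∑ i ∈ range (b ρ), e i‖ ≤ ‖∑ i ∈ range (b (ρ + 1)), e i‖)
    {ρ : ℕ} (hρ : ρ < d) : (R - 1) / 2 * ‖blockSum e b ρ‖ ≤ ‖blockSum e b (ρ + 1)‖ := by
  simp only [blockSum, sum_Ico_eq_sub _ (hb ρ.le_succ), sum_Ico_eq_sub _ (hb (ρ + 1).le_succ)]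
  exact mul_norm_sub_le_norm_sub_of_lacunary hR (hlac ρ hρ.le) (hlac (ρ + 1) hρ)

variable [NormedSpace ℝ X]

theorem sum_filter_blockIndex_mem (hb : StrictMono b) (hb0 : b 0 = 0) (e : ℕ → X)
    (c : ℕ → ℝ) {S : Finset ℕ} (hS : S ⊆ range (d + 1)) :
    ∑ i ∈ range (b (d + 1)) with blockIndex b d i ∈ S, c (blockIndex b d i) • e i =
      ∑ ρ ∈ S, c ρ • blockSum e b ρ := by
  rw [← sum_fiberwise_of_maps_to (g := blockIndex b d) (t := S) fun i hi => (mem_filter.1 hi).2]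
  refine sum_congr rfl fun ρ hρ => ?_
  have hρd : ρ ≤ d := Nat.lt_succ_iff.1 (mem_range.1 (hS hρ))
  have hfib : {i ∈ {i ∈ range (b (d + 1)) | blockIndex b d i ∈ S} | blockIndex b d i = ρ} =
      Ico (b ρ) (b (ρ + 1)) := by
    rw [filter_filter, ← filter_blockIndex_eq hb hb0 hρd]
    exact filter_congr fun i _ => ⟨And.right, fun h => ⟨h ▸ hρ, h⟩⟩
  rw [hfib, blockSum, smul_sum]
  refine sum_congr rfl fun i hi => ?_
  rw [← filter_blockIndex_eq hb hb0 hρd] at hi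
  rw [(mem_filter.1 hi).2]

theorem sum_fin_blockIndex_smul (hb : StrictMono b) (hb0 : b 0 = 0) (e : ℕ → X)
    (c : ℕ → ℝ) :
    ∑ i : Fin (b (d + 1)), c (blockIndex b d i) • e i =
      ∑ ρ ∈ range (d + 1), c ρ • blockSum e b ρ := by
  rw [Fin.sum_univ_eq_sum_range (fun i => c (blockIndex b d i) • e i),
    ← sum_filter_blockIndex_mem hb hb0 e c subset_rfl,
    filter_true_of_mem fun i _ => mem_range.2 (Nat.lt_succ_of_le (blockIndex_le i))]

theorem KUnconditional.norm_sum_blockSum_le {K : ℝ} {e : ℕ → X} (he : KUnconditional K e)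
    (hb : StrictMono b) (hb0 : b 0 = 0) {S : Finset ℕ} (hS : S ⊆ range (d + 1))
    (c : ℕ → ℝ) :
    ‖∑ ρ ∈ S, c ρ • blockSum e b ρ‖ ≤ K * ‖∑ ρ ∈ range (d + 1), c ρ • blockSum e b ρ‖ := by
  rw [← sum_filter_blockIndex_mem hb hb0 e c hS, ← sum_filter_blockIndex_mem hb hb0 e c subset_rfl,
    filter_true_of_mem fun i _ => mem_range.2 (Nat.lt_succ_of_le (blockIndex_le i))]
  exact he.norm_sum_filter_le _ _ fun i => c (blockIndex b d i)

theorem exists_merged_blockwise_close (hb : StrictMono b) (hb0 : b 0 = 0) {e : ℕ → X}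
    {F : (Fin (b (d + 1)) → ℝ) → Fin (b (d + 1)) → ℝ} {η : ℝ} (hF₂ : IsStepPreserving F)
    (hF₃ : ModulusLE e (1 / d) η F) {g : ℕ → ℝ}
    (hg : ∀ i, F (stair b d _ id) i = g (blockIndex b d i)) (p : ℕ) :
    ∃ h : ℕ → ℝ, ‖∑ ρ ∈ range (d + 1), (g ρ - h ρ) • blockSum e b ρ‖ ≤ η ∧
      ∀ ρ < d, (ρ + p) % 2 = 0 → h ρ = h (ρ + 1) := by
  have hk : 0 < b (d + 1) := d.succ_pos.trans_le (hb.id_le _)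
  have hz := stair_mem_posSphere hb hb0 hk (d := d) (ℓ := id) fun _ => le_rfl
  have hy := stair_mem_posSphere hb hb0 hk (d := d) (mergeLevel_le p)
  obtain ⟨h, hh, hmerge⟩ := exists_blockwise_of_isStepPreserving hb hb0 hF₂ (mergeLevel_le p)
  refine ⟨h, ?_, fun ρ hρ hp => hmerge ρ hρ.le (ρ + 1) hρ (mergeLevel_succ hp).symm⟩
  have := hF₃ _ _ hz.1 hz.2 hy.1 hy.2
    (supNorm_stair_sub_le (mergeLevel_le p) (le_mergeLevel_add_one p))
  simpa only [hg, hh, sum_fin_blockIndex_smul hb hb0, ← sum_sub_distrib, ← sub_smul] using this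

theorem norm_sum_stair_sub_le {K : ℝ} {e : ℕ → X} (he : KUnconditional K e) (hK : 0 ≤ K)
    {k : ℕ} (hb : StrictMono b) (hb0 : b 0 = 0) (hk : b (d + 1) = k)
    (hlac : ∀ ρ ≤ d,
      (12 * d + 5) * ‖∑ i ∈ range (b ρ), e i‖ ≤ ‖∑ i ∈ range (b (ρ + 1)), e i‖)
    {F : (Fin k → ℝ) → Fin k → ℝ} {η : ℝ} (hF₁ : MapsToPosSphere e F)
    (hF₂ : IsStepPreserving F) (hF₃ : ModulusLE e (1 / d) η F) :
    ‖(∑ i : Fin k, F (stair b d k id) i • e i) -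
      ‖∑ i ∈ range k, e i‖⁻¹ • ∑ i ∈ range k, e i‖ ≤ 6 * (K * η) := by
  subst hk
  have hk : 0 < b (d + 1) := d.succ_pos.trans_le (hb.id_le _)
  have hz := stair_mem_posSphere hb hb0 hk (d := d) (ℓ := id) fun _ => le_rfl
  obtain ⟨g, hg, -⟩ := exists_blockwise_of_isStepPreserving hb hb0 hF₂ (ℓ := id) fun _ => le_rfl
  obtain ⟨hE, hEclose, hEmerge⟩ := exists_merged_blockwise_close hb hb0 hF₂ hF₃ hg 0
  obtain ⟨hO, hOclose, hOmerge⟩ := exists_merged_blockwise_close hb hb0 hF₂ hF₃ hg 1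
  have hgrowth : ∀ ρ < d, (6 * d + 2) * ‖blockSum e b ρ‖ ≤ ‖blockSum e b (ρ + 1)‖ :=
    fun ρ hρ => by
      have := mul_norm_blockSum_le_of_lacunary hb.monotone (by linarith) hlac hρ
      convert this using 2
      ring
  have hT := norm_sum_sub_last_smul_le hK (fun S hS c => he.norm_sum_blockSum_le hb hb0 hS c)
    (by linarith [(d.cast_nonneg : (0 : ℝ) ≤ d)]) (by linarith) hgrowth hEclose hOclose
    (fun ρ hρ hev => hEmerge ρ hρ (Nat.even_iff.1 hev))
    (fun ρ hρ hodd => hOmerge ρ hρ (by rw [Nat.odd_iff] at hodd; omega))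
  have hgd : 0 ≤ g d := by
    have := (hF₁ _ hz.1 hz.2).2 ⟨b d, hb d.lt_succ_self⟩
    rwa [hg, blockIndex_apply hb hb0 le_rfl] at this
  have hFz : ∑ i : Fin (b (d + 1)), F (stair b d _ id) i • e i =
      ∑ ρ ∈ range (d + 1), g ρ • blockSum e b ρ := by
    simp only [hg]
    exact sum_fin_blockIndex_smul hb hb0 e g
  have hones : ∑ i ∈ range (b (d + 1)), e i = ∑ ρ ∈ range (d + 1), blockSum e b ρ := by
    have := sum_fin_blockIndex_smul (d := d) hb hb0 e fun _ => (1 : ℝ)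
    simp only [one_smul] at this
    rw [← this, Fin.sum_univ_eq_sum_range e]
  refine (norm_sub_inv_norm_smul_le (δ := 3 * (K * η)) (hF₁ _ hz.1 hz.2).1 hgd ?_).trans_eq
    (by ring)
  rw [hFz, hones, smul_sum, ← sum_sub_distrib]
  simpa only [sub_smul] using hT

theorem localPropertyQ_of_not_bddAbove {K : ℝ} {e : ℕ → X} (he : KUnconditional K e)
    (hK : 0 < K) (ht : ¬ BddAbove (Set.range fun n => ‖∑ i ∈ range n, e i‖)) :
    LocalPropertyQ e (1 / (6 * K)) := by
  intro d hd ε _ _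
  -- The blocks will then grow at the rate `(12 d + 5 - 1) / 2 = 6 d + 2 ≥ max 2 (6 d)`.
  obtain ⟨Q, hQ, hlac⟩ := exists_lacunary_set ht (12 * d + 5)
  refine ⟨Q, hQ, fun m hm0 hmono hmQ k hkQ hdk F hF₁ hF₂ hF₃ => ?_⟩
  set b : ℕ → ℕ := fun ρ => if ρ ≤ d then m ρ else k + (ρ - (d + 1))
  have hbm : ∀ ρ ≤ d, m ρ = b ρ := fun ρ hρ => (if_pos hρ).symm
  have hk : b (d + 1) = k := by simp [b]
  have hb0 : b 0 = 0 := by simp [b, hm0]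
  have hb : StrictMono b := strictMono_nat_of_lt_succ fun ρ => by
    rcases lt_trichotomy ρ d with h | rfl | h
    · simpa [b, h.le, Nat.succ_le_of_lt h] using hmono ρ h
    · simpa [b] using hdk
    · simp only [b, if_neg (by omega : ¬ ρ ≤ d), if_neg (by omega : ¬ ρ + 1 ≤ d)]
      omega
  have hbQ : ∀ ρ, 1 ≤ ρ → ρ ≤ d + 1 → b ρ ∈ Q := fun ρ h₁ h₂ => by
    rcases h₂.lt_or_eq with h₂ | rfl
    · exact hbm ρ (by omega) ▸ hmQ ρ h₁ (by omega)
    · exact hk ▸ hkQ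
  have hblac : ∀ ρ ≤ d, (12 * d + 5) * ‖∑ i ∈ range (b ρ), e i‖ ≤
      ‖∑ i ∈ range (b (ρ + 1)), e i‖ := fun ρ hρ => by
    rcases Nat.eq_zero_or_pos ρ with rfl | hpos
    · simp [hb0]
    · exact hlac _ (hbQ ρ hpos (by omega)) _ (hbQ (ρ + 1) (by omega) (by omega))
        (hb ρ.lt_succ_self)
  rw [show zVec d k m = stair b d k id from hk ▸ zVec_eq_stair hd hb hb0 hbm]
  refine (norm_sum_stair_sub_le he hK.le hb hb0 hk hblac hF₁ hF₂ hF₃).trans_eq ?_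
  field_simp

end

theorem exists_strictMono_zero_mem {Q : Set ℕ} (hQ : Q.Infinite) :
    ∃ b : ℕ → ℕ, StrictMono b ∧ b 0 = 0 ∧ ∀ ρ, 1 ≤ ρ → b ρ ∈ Q := by
  refine ⟨fun ρ => if ρ = 0 then 0 else Nat.nth (· ∈ Q) ρ,
    strictMono_nat_of_lt_succ fun ρ => ?_, rfl, fun ρ hρ => ?_⟩
  · rcases ρ with _ | ρ
    · simpa using (Nat.zero_le _).trans_lt
        (Nat.nth_strictMono (p := (· ∈ Q)) hQ Nat.zero_lt_one)
    · simpa using Nat.nth_strictMono (p := (· ∈ Q)) hQ (ρ + 1).lt_succ_self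
  · simpa [Nat.one_le_iff_ne_zero.1 hρ] using Nat.nth_mem_of_infinite (p := (· ∈ Q)) hQ ρ

section

variable {X : Type*} [NormedAddCommGroup X] [NormedSpace ℝ X]

theorem sum_fin_smul_eq_sum_range_extend {k : ℕ} (x : Fin k → ℝ) (e : ℕ → X) :
    ∑ i : Fin k, x i • e i = ∑ n ∈ range k, Function.extend Fin.val x 0 n • e n := by
  rw [← Fin.sum_univ_eq_sum_range (fun n => Function.extend Fin.val x 0 n • e n)]
  simp [Fin.val_injective.extend_apply]

namespace IsEquivC0

variable {C : ℝ} {e : ℕ → X} {k : ℕ}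

theorem norm_sum_fin_le (hC : IsEquivC0 C e) (hC0 : 0 ≤ C) (hk : 0 < k) (x : Fin k → ℝ) :
    ‖∑ i : Fin k, x i • e i‖ ≤ C * supNorm x := by
  rw [sum_fin_smul_eq_sum_range_extend]
  refine (hC _ (nonempty_range_iff.2 hk.ne') _).2.trans
    (mul_le_mul_of_nonneg_left (sup'_le _ _ fun n hn => ?_) hC0)
  exact (congrArg abs (Fin.val_injective.extend_apply x 0 ⟨n, mem_range.1 hn⟩)).trans_le
    (abs_le_supNorm x _)

theorem inv_mul_abs_le_norm_sum_fin (hC : IsEquivC0 C e) (hC0 : 0 ≤ C) (x : Fin k → ℝ)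
    (i : Fin k) : C⁻¹ * |x i| ≤ ‖∑ j : Fin k, x j • e j‖ := by
  rw [sum_fin_smul_eq_sum_range_extend]
  have hi : (i : ℕ) ∈ range k := mem_range.2 i.isLt
  refine le_trans ?_ (hC _ ⟨_, hi⟩ _).1
  gcongr
  simpa only [Fin.val_injective.extend_apply] using
    le_sup' (fun n => |Function.extend Fin.val x 0 n|) hi

theorem inv_mul_supNorm_le_norm_sum_fin (hC : IsEquivC0 C e) (hC0 : 0 < C)
    (x : Fin k → ℝ) : C⁻¹ * supNorm x ≤ ‖∑ i : Fin k, x i • e i‖ := by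
  rw [inv_mul_le_iff₀ hC0]
  exact supNorm_le (by positivity) fun i =>
    (inv_mul_le_iff₀ hC0).1 (hC.inv_mul_abs_le_norm_sum_fin hC0.le x i)

end IsEquivC0

noncomputable def normalizeMap (e : ℕ → X) (k : ℕ) (x : Fin k → ℝ) : Fin k → ℝ :=
  ‖∑ i : Fin k, x i • e i‖⁻¹ • x

theorem sum_normalizeMap_smul (e : ℕ → X) {k : ℕ} (x : Fin k → ℝ) :
    ∑ i : Fin k, normalizeMap e k x i • e i =
      ‖∑ i : Fin k, x i • e i‖⁻¹ • ∑ i : Fin k, x i • e i := by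
  simp [normalizeMap, smul_sum, mul_smul]

theorem isStepPreserving_normalizeMap (e : ℕ → X) (k : ℕ) : IsStepPreserving (normalizeMap e k) :=
  fun x _ _ i j hij => by simp [normalizeMap, hij]

variable {C : ℝ} {e : ℕ → X} {k : ℕ}

theorem mapsToPosSphere_normalizeMap (hC : IsEquivC0 C e) (hC0 : 0 < C) :
    MapsToPosSphere e (normalizeMap e k) := by
  intro x hx hx0
  have hpos : 0 < ‖∑ i : Fin k, x i • e i‖ :=
    (by positivity : (0 : ℝ) < C⁻¹ * 1).trans_le (hx ▸ hC.inv_mul_supNorm_le_norm_sum_fin hC0 x)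
  refine ⟨?_, fun i => mul_nonneg (inv_nonneg.2 hpos.le) (hx0 i)⟩
  rw [sum_normalizeMap_smul, norm_smul, norm_inv, norm_norm, inv_mul_cancel₀ hpos.ne']

theorem modulusLE_normalizeMap (hC : IsEquivC0 C e) (hC0 : 0 < C) (hk : 0 < k) (t : ℝ) :
    ModulusLE e t (2 * (C * (C * t))) (normalizeMap e k) := by
  intro x y hx hx0 hy _ hxy
  have hSx : C⁻¹ ≤ ‖∑ i : Fin k, x i • e i‖ := by
    simpa [hx] using hC.inv_mul_supNorm_le_norm_sum_fin hC0 x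
  have hSx' : ‖∑ i : Fin k, x i • e i‖⁻¹ ≤ C := inv_le_of_inv_le₀ hC0 hSx
  have hdiff : ‖∑ i : Fin k, x i • e i - ∑ i : Fin k, y i • e i‖ ≤ C * t := by
    have : ∑ i : Fin k, x i • e i - ∑ i : Fin k, y i • e i = ∑ i : Fin k, (x - y) i • e i := by
      simp [sub_smul, sum_sub_distrib]
    rw [this]
    exact (hC.norm_sum_fin_le hC0.le hk _).trans (mul_le_mul_of_nonneg_left hxy hC0.le)
  rw [sum_normalizeMap_smul, sum_normalizeMap_smul]
  refine norm_sub_inv_norm_smul_le ?_ (inv_nonneg.2 (norm_nonneg (∑ i : Fin k, x i • e i))) ?_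
  · have hpos : 0 < ‖∑ i : Fin k, x i • e i‖ := (inv_pos.2 hC0).trans_le hSx
    rw [norm_smul, norm_inv, norm_norm, inv_mul_cancel₀ hpos.ne']
  · rw [← smul_sub, norm_smul, norm_inv, norm_norm]
    exact mul_le_mul hSx' hdiff (norm_nonneg _) hC0.le

theorem inv_mul_inv_le_norm_sum_normalizeMap_stair_sub (hC : IsEquivC0 C e) (hC0 : 0 < C)
    {b : ℕ → ℕ} {d : ℕ} (hd : 0 < d) (hb : StrictMono b) (hb0 : b 0 = 0) :
    C⁻¹ * C⁻¹ ≤ ‖(∑ i : Fin (b (d + 1)), normalizeMap e _ (stair b d _ id) i • e i) -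
      ‖∑ i ∈ range (b (d + 1)), e i‖⁻¹ • ∑ i ∈ range (b (d + 1)), e i‖ := by
  set k := b (d + 1)
  have hk : 0 < k := d.succ_pos.trans_le (hb.id_le _)
  set τ := ‖∑ i ∈ range k, e i‖
  have hones : ∑ i ∈ range k, e i = ∑ i : Fin k, (fun _ => (1 : ℝ)) i • e i := by
    simp only [one_smul, Fin.sum_univ_eq_sum_range e]
  have hτ : τ ≤ C := by
    have := (hC.norm_sum_fin_le hC0.le hk _).trans
      (mul_le_of_le_one_right hC0.le (supNorm_le zero_le_one fun _ => (abs_one (α := ℝ)).le))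
    rwa [← hones] at this
  have hτ0 : 0 < τ := by
    have := hC.inv_mul_abs_le_norm_sum_fin hC0.le (fun _ => (1 : ℝ)) ⟨0, hk⟩
    rw [← hones, abs_one, mul_one] at this
    exact (inv_pos.2 hC0).trans_le this
  set w : Fin k → ℝ := normalizeMap e k (stair b d k id) - fun _ => τ⁻¹
  have hw : ∑ i : Fin k, w i • e i = (∑ i : Fin k, normalizeMap e k (stair b d k id) i • e i) -
      τ⁻¹ • ∑ i ∈ range k, e i := by
    simp [w, sub_smul, sum_sub_distrib, hones, smul_sum]
  have hlast : w ⟨b d, hb d.lt_succ_self⟩ = -τ⁻¹ := by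
    simp [w, normalizeMap, stair, blockIndex_apply hb hb0 le_rfl,
      div_self (by positivity : (d : ℝ) ≠ 0)]
  calc C⁻¹ * C⁻¹ ≤ C⁻¹ * τ⁻¹ := by gcongr
    _ = C⁻¹ * |w ⟨b d, hb d.lt_succ_self⟩| := by rw [hlast, abs_neg, abs_of_pos (inv_pos.2 hτ0)]
    _ ≤ ‖∑ i : Fin k, w i • e i‖ := hC.inv_mul_abs_le_norm_sum_fin hC0.le w _
    _ = _ := by rw [hw]

theorem not_localPropertyQ_of_isEquivC0 {γ : ℝ} (hC : IsEquivC0 C e) (hC1 : 1 ≤ C)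
    (hγ : 0 < γ) : ¬ LocalPropertyQ e γ := by
  intro hQ
  have hC0 : 0 < C := by linarith
  set ε : ℝ := C⁻¹ * C⁻¹ / 2 with hεdef
  have hε : 0 < ε := by positivity
  have hε1 : ε < 1 := by
    have : C⁻¹ ≤ 1 := inv_le_one_of_one_le₀ hC1
    have : C⁻¹ * C⁻¹ ≤ 1 := mul_le_one₀ this (by positivity) this
    linarith
  obtain ⟨d, hd⟩ := exists_nat_gt (2 * (C * C) / (γ * ε))
  have hd0 : 0 < d := by exact_mod_cast (by positivity : (0 : ℝ) < 2 * (C * C) / (γ * ε)).trans hd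
  obtain ⟨Q, hQinf, hQ'⟩ := hQ d hd0 ε hε hε1
  obtain ⟨b, hb, hb0, hbQ⟩ := exists_strictMono_zero_mem hQinf
  have hk : 0 < b (d + 1) := d.succ_pos.trans_le (hb.id_le _)
  have hmod : ModulusLE e (1 / d) (γ * ε) (normalizeMap e (b (d + 1))) :=
    fun x y hx hx0 hy hy0 hxy =>
      (modulusLE_normalizeMap hC hC0 hk _ x y hx hx0 hy hy0 hxy).trans <| by
      rw [div_lt_iff₀ (by positivity)] at hd
      rw [mul_one_div, ← mul_div_assoc, mul_div_assoc', div_le_iff₀ (by exact_mod_cast hd0)]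
      nlinarith
  have h := hQ' b hb0 (fun s _ => hb s.lt_succ_self) (fun s hs _ => hbQ s hs) _
    (hbQ (d + 1) d.succ_pos) (hb d.lt_succ_self) _ (mapsToPosSphere_normalizeMap hC hC0)
    (isStepPreserving_normalizeMap e _) hmod
  rw [zVec_eq_stair hd0 hb hb0 fun _ _ => rfl] at h
  have := inv_mul_inv_le_norm_sum_normalizeMap_stair_sub hC hC0 hd0 hb hb0
  linarith

end

theorem stmt_19_general {X : Type*} [NormedAddCommGroup X] [NormedSpace ℝ X]
    (e : ℕ → X)
    (hnorm : ∀ i, ‖e i‖ = 1)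
    (huncond : ∃ K : ℝ, 1 ≤ K ∧ ∀ (s : Finset ℕ) (a b : ℕ → ℝ),
      (∀ i ∈ s, |a i| ≤ |b i|) → ‖∑ i ∈ s, a i • e i‖ ≤ K * ‖∑ i ∈ s, b i • e i‖) :
    -- local Property Q:
    (∃ γ : ℝ, 0 < γ ∧ ∀ d : ℕ, 1 ≤ d → ∀ ε : ℝ, 0 < ε → ε < 1 →
      ∃ Q : Set ℕ, Q.Infinite ∧
        ∀ (m : ℕ → ℕ), m 0 = 0 → (∀ s, s < d → m s < m (s + 1)) →
          (∀ s, 1 ≤ s → s ≤ d → m s ∈ Q) →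
          ∀ k : ℕ, k ∈ Q → m d < k →
          ∀ F : (Fin k → ℝ) → (Fin k → ℝ),
            (∀ x : Fin k → ℝ, supNorm x = 1 → (∀ i, 0 ≤ x i) →
              (‖∑ i : Fin k, F x i • e (i : ℕ)‖ = 1 ∧ ∀ i, 0 ≤ F x i)) →
            (∀ x : Fin k → ℝ, supNorm x = 1 → (∀ i, 0 ≤ x i) →
              ∀ i j, x i = x j → F x i = F x j) →
            (∀ x y : Fin k → ℝ, supNorm x = 1 → (∀ i, 0 ≤ x i) →
              supNorm y = 1 → (∀ i, 0 ≤ y i) → supNorm (x - y) ≤ 1 / (d : ℝ) →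
              ‖(∑ i : Fin k, F x i • e (i : ℕ)) -
                ∑ i : Fin k, F y i • e (i : ℕ)‖ ≤ γ * ε) →
            ‖(∑ i : Fin k, F (zVec d k m) i • e (i : ℕ)) -
              ‖∑ i ∈ Finset.range k, e i‖⁻¹ • ∑ i ∈ Finset.range k, e i‖ ≤ ε)
    ↔
    -- `(e_i)` is not equivalent to the canonical basis of `c_0`:
    ¬ (∃ C : ℝ, 1 ≤ C ∧ ∀ (s : Finset ℕ) (hs : s.Nonempty) (a : ℕ → ℝ),
        C⁻¹ * s.sup' hs (fun i => |a i|) ≤ ‖∑ i ∈ s, a i • e i‖ ∧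
        ‖∑ i ∈ s, a i • e i‖ ≤ C * s.sup' hs (fun i => |a i|)) := by
  obtain ⟨K, hK, he⟩ := huncond
  refine ⟨fun ⟨γ, hγ, hQ⟩ ⟨C, hC1, hC⟩ => not_localPropertyQ_of_isEquivC0 hC hC1 hγ hQ,
    fun hc0 => ⟨1 / (6 * K), by positivity, ?_⟩⟩
  exact localPropertyQ_of_not_bddAbove he (by linarith)
    (KUnconditional.not_bddAbove_norm_partialSum he hK hnorm hc0)

/-- Corollary 6.5 of the paper: a normalized unconditional basis `(e_i)` of
a Banach space `X` has the local Property Q if and only if it is not equivalent to the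
canonical basis of `c_0`. The sequence is 0-indexed; a map `F : S⁺_{ℓ∞^k} → S⁺_{X_k}` is
encoded by its coordinate functions, `F x = ∑_{i<k} (F x) i • e i`. -/
theorem stmt_19 {X : Type*} [NormedAddCommGroup X] [NormedSpace ℝ X] [CompleteSpace X]
    (e : ℕ → X)
    (hnorm : ∀ i, ‖e i‖ = 1)
    (hbasis : ∀ x : X, ∃! a : ℕ → ℝ,
      Filter.Tendsto (fun n => ∑ i ∈ Finset.range n, a i • e i) Filter.atTop (nhds x))
    (huncond : ∃ K : ℝ, 1 ≤ K ∧ ∀ (s : Finset ℕ) (a b : ℕ → ℝ),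
      (∀ i ∈ s, |a i| ≤ |b i|) → ‖∑ i ∈ s, a i • e i‖ ≤ K * ‖∑ i ∈ s, b i • e i‖) :
    -- local Property Q:
    (∃ γ : ℝ, 0 < γ ∧ ∀ d : ℕ, 1 ≤ d → ∀ ε : ℝ, 0 < ε → ε < 1 →
      ∃ Q : Set ℕ, Q.Infinite ∧
        ∀ (m : ℕ → ℕ), m 0 = 0 → (∀ s, s < d → m s < m (s + 1)) →
          (∀ s, 1 ≤ s → s ≤ d → m s ∈ Q) →
          ∀ k : ℕ, k ∈ Q → m d < k →
          ∀ F : (Fin k → ℝ) → (Fin k → ℝ),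
            (∀ x : Fin k → ℝ, supNorm x = 1 → (∀ i, 0 ≤ x i) →
              (‖∑ i : Fin k, F x i • e (i : ℕ)‖ = 1 ∧ ∀ i, 0 ≤ F x i)) →
            (∀ x : Fin k → ℝ, supNorm x = 1 → (∀ i, 0 ≤ x i) →
              ∀ i j, x i = x j → F x i = F x j) →
            (∀ x y : Fin k → ℝ, supNorm x = 1 → (∀ i, 0 ≤ x i) →
              supNorm y = 1 → (∀ i, 0 ≤ y i) → supNorm (x - y) ≤ 1 / (d : ℝ) →
              ‖(∑ i : Fin k, F x i • e (i : ℕ)) -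
                ∑ i : Fin k, F y i • e (i : ℕ)‖ ≤ γ * ε) →
            ‖(∑ i : Fin k, F (zVec d k m) i • e (i : ℕ)) -
              ‖∑ i ∈ Finset.range k, e i‖⁻¹ • ∑ i ∈ Finset.range k, e i‖ ≤ ε)
    ↔
    -- `(e_i)` is not equivalent to the canonical basis of `c_0`:
    ¬ (∃ C : ℝ, 1 ≤ C ∧ ∀ (s : Finset ℕ) (hs : s.Nonempty) (a : ℕ → ℝ),
        C⁻¹ * s.sup' hs (fun i => |a i|) ≤ ‖∑ i ∈ s, a i • e i‖ ∧
        ‖∑ i ∈ s, a i • e i‖ ≤ C * s.sup' hs (fun i => |a i|)) :=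
  stmt_19_general e hnorm huncond
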